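/- Abstract correctness of the universal-quantifier gadget: model each substructure as a function with one left input terminal L and, on the right, outputs YES and NO and an input BACK, such that routing sends L to YES if the substructure's formula is true and L to NO otherwise, and (by the matching property) BACK to the remaining right-hand output. Connecting two such substructures S₀ and S₁ by the universal wiring (YES₀ → L₁, NO₀ → NO_out, YES₁ → YES_out, NO₁ → BACK₀, BACK_out → BACK₁) yields a combined structure in which the left input L reaches YES_out if and only if both substructures' formulas are true, and reaches NO_out otherwise. -/
import Mathlib


/-- Input terminals of a substructure. -/
inductive Term where
  | L | BACK
deriving DecidableEq

/-- Output terminals of a substructure. -/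
inductive OutT where
  | YES | NO
deriving DecidableEq

/-- The internal routing of a substructure whose formula has truth value `b`:
`L ↦ YES`, `BACK ↦ NO` if `b` is true, and `L ↦ NO`, `BACK ↦ YES` otherwise. -/
def route (b : Bool) : Term → OutT := fun t =>
  match b, t with
  | true, .L => .YES
  | true, .BACK => .NO
  | false, .L => .NO
  | false, .BACK => .YES

/-- Nodes of the combined gadget: the combined terminals together with the
input and output terminals of the two substructures `S₀` and `S₁`. -/
inductive GNode where
  | inL | inBACK | outYES | outNO
  | inp : Fin 2 → Term → GNode
  | out : Fin 2 → OutT → GNode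
deriving DecidableEq

/-- One step of following the universal gadget: the wiring
`L → L₀`, `YES₀ → L₁`, `NO₀ → NO_out`, `YES₁ → YES_out`, `NO₁ → BACK₀`,
`BACK_out → BACK₁`, together with the internal routings `r0` and `r1` of the
two substructures. -/
inductive uEdge (r0 r1 : Term → OutT) : GNode → GNode → Prop where
  | wire_inL : uEdge r0 r1 .inL (.inp 0 .L)
  | wire_yes0 : uEdge r0 r1 (.out 0 .YES) (.inp 1 .L)
  | wire_no0 : uEdge r0 r1 (.out 0 .NO) .outNO
  | wire_yes1 : uEdge r0 r1 (.out 1 .YES) .outYES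
  | wire_no1 : uEdge r0 r1 (.out 1 .NO) (.inp 0 .BACK)
  | wire_back : uEdge r0 r1 .inBACK (.inp 1 .BACK)
  | route0 (t : Term) : uEdge r0 r1 (.inp 0 t) (.out 0 (r0 t))
  | route1 (t : Term) : uEdge r0 r1 (.inp 1 t) (.out 1 (r1 t))

lemma reach_inv {r0 r1 : Term → OutT} (Inv : GNode → Prop)
    (hc : ∀ a b, uEdge r0 r1 a b → Inv a → Inv b) :
    ∀ x, Inv GNode.inL → Relation.ReflTransGen (uEdge r0 r1) .inL x → Inv x := by
  intro x h0 h
  induction h with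
  | refl => exact h0
  | tail _ e ih => exact hc _ _ e ih

/-- Correctness of the universal-quantifier gadget: with substructures of truth
values `b0` and `b1`, following from the combined left input reaches `YES_out`
iff both formulas are true, and reaches `NO_out` otherwise. -/
theorem universal_gadget_correct (b0 b1 : Bool) :
    (Relation.ReflTransGen (uEdge (route b0) (route b1)) .inL .outYES ↔
      (b0 = true ∧ b1 = true)) ∧
    (¬ (b0 = true ∧ b1 = true) →
      Relation.ReflTransGen (uEdge (route b0) (route b1)) .inL .outNO) := by
  cases b0 <;> cases b1
  all_goals constructor
  -- case false false
  · constructor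
    · intro h
      exfalso
      have := reach_inv (r0 := route false) (r1 := route false)
        (fun n => n = .inL ∨ n = .inp 0 .L ∨ n = .out 0 .NO ∨ n = .outNO)
        (by rintro a b e (rfl|rfl|rfl|rfl) <;> cases e <;> simp [route]) _ (Or.inl rfl) h
      simp at this
    · rintro ⟨h, -⟩; exact absurd h (by simp)
  · intro _
    exact .tail (.tail (.single .wire_inL) (uEdge.route0 .L)) uEdge.wire_no0
  -- case false true
  · constructor
    · intro h
      exfalso
      have := reach_inv (r0 := route false) (r1 := route true)
        (fun n => n = .inL ∨ n = .inp 0 .L ∨ n = .out 0 .NO ∨ n = .outNO)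
        (by rintro a b e (rfl|rfl|rfl|rfl) <;> cases e <;> simp [route]) _ (Or.inl rfl) h
      simp at this
    · rintro ⟨h, -⟩; exact absurd h (by simp)
  · intro _
    exact .tail (.tail (.single .wire_inL) (uEdge.route0 .L)) uEdge.wire_no0
  -- case true false
  · constructor
    · intro h
      exfalso
      have := reach_inv (r0 := route true) (r1 := route false)
        (fun n => n = .inL ∨ n = .inp 0 .L ∨ n = .out 0 .YES ∨ n = .inp 1 .L ∨
          n = .out 1 .NO ∨ n = .inp 0 .BACK ∨ n = .out 0 .NO ∨ n = .outNO)
        (by rintro a b e (rfl|rfl|rfl|rfl|rfl|rfl|rfl|rfl) <;> cases e <;> simp [route])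
        _ (Or.inl rfl) h
      simp at this
    · rintro ⟨-, h⟩; exact absurd h (by simp)
  · intro _
    exact .tail (.tail (.tail (.tail (.tail (.tail (.single uEdge.wire_inL)
      (uEdge.route0 .L)) uEdge.wire_yes0) (uEdge.route1 .L)) uEdge.wire_no1)
      (uEdge.route0 .BACK)) uEdge.wire_no0
  -- case true true
  · constructor
    · intro _; exact ⟨rfl, rfl⟩
    · intro _
      exact .tail (.tail (.tail (.tail (.single uEdge.wire_inL)
        (uEdge.route0 .L)) uEdge.wire_yes0) (uEdge.route1 .L)) uEdge.wire_yes1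
  · intro h; exact absurd ⟨rfl, rfl⟩ h
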